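/- arXiv:1303.2794 — 6 statements merged into one kernel-verified Lean document; each statement's English description precedes it below -/
import Mathlib

section
/- For 0 < q < 1, real numbers r' > r > 0, and integers l ≥ 0, m ≥ 0: ∑_{k=0}^{l} C(l,k)(r/r')^k(1-r/r')^{l-k} · q^k · k^{↓m} = (qr/(q'r'))^m · (q')^l · l^{↓m}, where q' := 1 - (1-q)·r/r'. -/
/-!
Since `C(l,k) k^{↓m} = l^{↓m} C(l-m,k-m)`, the sum with `p = r/r'` equals
`l^{↓m} (qp)^m ∑_j C(l-m,j) (qp)^j (1-p)^{l-m-j} = l^{↓m} (qp)^m (qp + 1 - p)^{l-m}`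
by the binomial theorem, and `qp + 1 - p = q'` is positive.
-/

/-- Falling factorial `x^{↓m} = x(x-1)⋯(x-m+1)`. -/
noncomputable def ffall (x : ℝ) (m : ℕ) : ℝ := ∏ i ∈ Finset.range m, (x - i)

open Finset

theorem ffall_natCast (k m : ℕ) : ffall k m = k.descFactorial m := by
  rw [ffall, ← descPochhammer_eval_eq_prod_range, descPochhammer_eval_eq_descFactorial]

theorem Nat.choose_add_mul_descFactorial (l m j : ℕ) :
    l.choose (m + j) * (m + j).descFactorial m = l.descFactorial m * (l - m).choose j := by
  rw [descFactorial_eq_factorial_mul_choose, descFactorial_eq_factorial_mul_choose,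
    mul_left_comm, choose_mul (le_add_right m j), add_tsub_cancel_left, mul_assoc]

theorem sum_choose_mul_descFactorial_mul_pow {R : Type*} [CommSemiring R] (x y : R) (l m : ℕ) :
    ∑ k ∈ range (l + 1), (l.choose k * k.descFactorial m : R) * x ^ k * y ^ (l - k)
      = l.descFactorial m * x ^ m * (x + y) ^ (l - m) := by
  rcases lt_or_ge l m with hlm | hml
  · rw [Nat.descFactorial_eq_zero_iff_lt.2 hlm, Nat.cast_zero, zero_mul, zero_mul]
    refine sum_eq_zero fun k hk => ?_
    rw [Nat.descFactorial_eq_zero_iff_lt.2 ((mem_range_succ_iff.1 hk).trans_lt hlm)]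
    simp
  obtain ⟨n, rfl⟩ := Nat.exists_eq_add_of_le hml
  have hlow : ∀ k ∈ range m,
      ((m + n).choose k * k.descFactorial m : R) * x ^ k * y ^ (m + n - k) = 0 := by
    intro k hk
    rw [Nat.descFactorial_eq_zero_iff_lt.2 (mem_range.1 hk)]
    simp
  rw [add_assoc, sum_range_add, sum_eq_zero hlow, zero_add, add_tsub_cancel_left, add_pow,
    mul_sum]
  refine sum_congr rfl fun j _ => ?_
  rw [← Nat.cast_mul, Nat.choose_add_mul_descFactorial, add_tsub_cancel_left,
    Nat.add_sub_add_left, pow_add]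
  push_cast
  ring

theorem sum_choose_mul_descFactorial_mul_pow_eq_div_pow {K : Type*} [Field K] (x y : K)
    (hxy : x + y ≠ 0) (l m : ℕ) :
    ∑ k ∈ range (l + 1), (l.choose k * k.descFactorial m : K) * x ^ k * y ^ (l - k)
      = (x / (x + y)) ^ m * (x + y) ^ l * l.descFactorial m := by
  rw [sum_choose_mul_descFactorial_mul_pow]
  rcases lt_or_ge l m with hlm | hml
  · simp [Nat.descFactorial_eq_zero_iff_lt.2 hlm]
  rw [div_pow, pow_sub₀ _ hxy hml]
  ring

theorem binomial_link_geometric_falling_factorial_general (q : ℝ) (hq0 : 0 < q)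
    (r r' : ℝ) (hr : 0 < r) (hrr' : r < r') (l m : ℕ) :
    ∑ k ∈ Finset.range (l + 1),
        (l.choose k : ℝ) * (r / r') ^ k * (1 - r / r') ^ (l - k) * (q ^ k * ffall k m)
      = (q * r / ((1 - (1 - q) * (r / r')) * r')) ^ m
          * (1 - (1 - q) * (r / r')) ^ l * ffall l m := by
  rw [mul_div_mul_comm]
  set p := r / r'
  have hp0 : 0 < p := div_pos hr (hr.trans hrr')
  have hp1 : p < 1 := (div_lt_one (hr.trans hrr')).2 hrr'
  have hq' : q * p + (1 - p) = 1 - (1 - q) * p := by ring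
  have hq'_pos : 0 < q * p + (1 - p) := add_pos (mul_pos hq0 hp0) (sub_pos.2 hp1)
  calc _ = ∑ k ∈ range (l + 1),
        (l.choose k * k.descFactorial m : ℝ) * (q * p) ^ k * (1 - p) ^ (l - k) := by
          refine sum_congr rfl fun k _ => ?_
          rw [ffall_natCast, mul_pow]
          ring
    _ = _ := by
      rw [sum_choose_mul_descFactorial_mul_pow_eq_div_pow _ _ hq'_pos.ne', hq', ffall_natCast]
      ring

/-- The binomial link applied to `q^k k^{↓m}`. -/
theorem binomial_link_geometric_falling_factorial (q : ℝ) (hq0 : 0 < q) (hq1 : q < 1)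
    (r r' : ℝ) (hr : 0 < r) (hrr' : r < r') (l m : ℕ) :
    ∑ k ∈ Finset.range (l + 1),
        (l.choose k : ℝ) * (r / r') ^ k * (1 - r / r') ^ (l - k) * (q ^ k * ffall k m)
      = (q * r / ((1 - (1 - q) * (r / r')) * r')) ^ m
          * (1 - (1 - q) * (r / r')) ^ l * ffall l m :=
  binomial_link_geometric_falling_factorial_general q hq0 r r' hr hrr' l m
end

section
/- For r' > r > 0 and c > 0, the Meixner Q-matrices commute with the binomial links: Q^{(c)}_{r'} Λ^{r'}_r = Λ^{r'}_r Q^{(c)}_r as operators on polynomial functions on ℤ_+ (equivalently, as matrices of format ℤ_+ × ℤ_+, both sides having finitely many nonzero entries per row). -/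
/-!
Write `p = r / r'` and `Y = p X + (1 - p)`, so that row `l` of the binomial link has generating
polynomial `Y ^ l`. Right multiplication by `Q^{(c)}_r` acts on row generating polynomials as the
differential operator `D_r P = r c (X - 1) P + (X - 1) (r (X - 1) - 1) P'`, while left
multiplication by `Q^{(c)}_{r'}` combines the rows `l - 1`, `l`, `l + 1`. Since `X - 1 = (Y - 1) / p`
and `r = r' p`, `D_r (Y ^ l)` is a polynomial in `Y` alone, and it is precisely that combination
`r' (c + l) Y ^ (l + 1) + (r' + 1) l Y ^ (l - 1) - ((2 r' + 1) l + r' c) Y ^ l`.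
-/

/-- The Meixner `Q`-matrix on `ℤ₊ × ℤ₊`. -/
noncomputable def meixnerQ (c r : ℝ) (k j : ℕ) : ℝ :=
  if j = k + 1 then r * (c + k)
  else if j + 1 = k then (r + 1) * k
  else if j = k then -((2 * r + 1) * k + r * c)
  else 0

/-- The binomial link matrix. -/
noncomputable def binomLink (r r' : ℝ) (l k : ℕ) : ℝ :=
  (l.choose k : ℝ) * (r / r') ^ k * (1 - r / r') ^ (l - k)

open Polynomial

theorem tsum_eq_add_add_of_eq_zero {M : Type*} [AddCommMonoid M] [TopologicalSpace M]
    (f : ℕ → M) (a : ℕ) (h : ∀ k, k ≠ a → k ≠ a + 1 → k ≠ a + 2 → f k = 0) :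
    ∑' k, f k = f a + f (a + 1) + f (a + 2) := by
  rw [tsum_eq_sum (s := {a, a + 1, a + 2}) fun k hk => by
    simp only [Finset.mem_insert, Finset.mem_singleton, not_or] at hk
    exact h k hk.1 hk.2.1 hk.2.2]
  rw [Finset.sum_insert (by simp), Finset.sum_insert (by simp), Finset.sum_singleton, add_assoc]

section meixnerQ

variable (c r : ℝ)

theorem meixnerQ_succ_right (k : ℕ) : meixnerQ c r k (k + 1) = r * (c + k) := by
  simp [meixnerQ]

theorem meixnerQ_succ_left (j : ℕ) : meixnerQ c r (j + 1) j = (r + 1) * (j + 1) := by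
  rw [meixnerQ, if_neg (by omega), if_pos rfl]
  push_cast
  ring

theorem meixnerQ_self (k : ℕ) : meixnerQ c r k k = -((2 * r + 1) * k + r * c) := by
  simp [meixnerQ]

theorem meixnerQ_eq_zero {k j : ℕ} (h₁ : j ≠ k + 1) (h₂ : j + 1 ≠ k) (h₃ : j ≠ k) :
    meixnerQ c r k j = 0 := by
  simp [meixnerQ, h₁, h₂, h₃]

-- At `l = 0` the truncated `l - 1` is `0`, but its coefficient `(r + 1) * l` vanishes.
theorem tsum_meixnerQ_mul (l : ℕ) (f : ℕ → ℝ) :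
    ∑' k, meixnerQ c r l k * f k =
      r * (c + l) * f (l + 1) + (r + 1) * l * f (l - 1) - ((2 * r + 1) * l + r * c) * f l := by
  cases l with
  | zero =>
    rw [tsum_eq_add_add_of_eq_zero _ 0 fun k h₀ h₁ h₂ => by
      rw [meixnerQ_eq_zero c r (by omega) (by omega) (by omega), zero_mul]]
    rw [meixnerQ_self, meixnerQ_succ_right, meixnerQ_eq_zero c r (by omega) (by omega) (by omega)]
    push_cast
    ring
  | succ n =>
    rw [tsum_eq_add_add_of_eq_zero _ n fun k h₀ h₁ h₂ => by
      rw [meixnerQ_eq_zero c r (by omega) (by omega) (by omega), zero_mul]]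
    rw [meixnerQ_succ_left, meixnerQ_self, meixnerQ_succ_right, Nat.add_sub_cancel]
    push_cast
    ring

theorem tsum_mul_meixnerQ_zero (f : ℕ → ℝ) :
    ∑' k, f k * meixnerQ c r k 0 = f 1 * (r + 1) - f 0 * (r * c) := by
  rw [tsum_eq_add_add_of_eq_zero _ 0 fun k h₀ h₁ h₂ => by
    rw [meixnerQ_eq_zero c r (by omega) (by omega) (by omega), mul_zero]]
  rw [meixnerQ_self, meixnerQ_succ_left, meixnerQ_eq_zero c r (by omega) (by omega) (by omega)]
  push_cast
  ring

theorem tsum_mul_meixnerQ_succ (f : ℕ → ℝ) (i : ℕ) :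
    ∑' k, f k * meixnerQ c r k (i + 1) =
      f i * (r * (c + i)) + f (i + 2) * ((r + 1) * (i + 2))
        - f (i + 1) * ((2 * r + 1) * (i + 1) + r * c) := by
  rw [tsum_eq_add_add_of_eq_zero _ i fun k h₀ h₁ h₂ => by
    rw [meixnerQ_eq_zero c r (by omega) (by omega) (by omega), mul_zero]]
  rw [meixnerQ_succ_right, meixnerQ_self, meixnerQ_succ_left]
  push_cast
  ring

end meixnerQ

section PGF

variable {R : Type*} [CommRing R]

noncomputable def bernoulliPGF (p : R) : R[X] := C p * X + C (1 - p)

theorem coeff_bernoulliPGF_pow (p : R) (l k : ℕ) :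
    (bernoulliPGF p ^ l).coeff k = l.choose k * p ^ k * (1 - p) ^ (l - k) := by
  have h : bernoulliPGF p ^ l = ((X + C (1 - p)) ^ l).comp (C p * X) := by
    rw [pow_comp, add_comp, X_comp, C_comp, bernoulliPGF]
  rw [h, comp_C_mul_X_coeff, coeff_X_add_C_pow]
  ring

theorem coeff_X_mul_derivative (P : R[X]) (n : ℕ) :
    (X * derivative P).coeff n = n * P.coeff n := by
  cases n with
  | zero => simp
  | succ n => rw [coeff_X_mul, coeff_derivative, mul_comm, Nat.cast_succ]

-- `r c (X - 1) P + (X - 1) (r (X - 1) - 1) P'`, grouped by the three diagonals of `meixnerQ c r`.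
noncomputable def meixnerDiffOp (c r : R) (P : R[X]) : R[X] :=
  X * (C (r * c) * P + C r * (X * derivative P)) + C (r + 1) * derivative P
    - (C (2 * r + 1) * (X * derivative P) + C (r * c) * P)

theorem meixnerDiffOp_bernoulliPGF_pow (c r' p : R) (l : ℕ) :
    meixnerDiffOp c (r' * p) (bernoulliPGF p ^ l) =
      C (r' * (c + l)) * bernoulliPGF p ^ (l + 1) + C ((r' + 1) * l) * bernoulliPGF p ^ (l - 1)
        - C ((2 * r' + 1) * l + r' * c) * bernoulliPGF p ^ l := by
  have hY : derivative (bernoulliPGF p) = C p := by simp [bernoulliPGF]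
  rw [meixnerDiffOp, derivative_pow, hY]
  cases l <;>
    simp only [Nat.add_sub_cancel, pow_zero, pow_succ, bernoulliPGF, map_mul, map_add, map_sub,
      map_zero, map_one, map_natCast, map_ofNat, Nat.cast_zero, Nat.cast_succ] <;>
    ring

end PGF

theorem tsum_coeff_mul_meixnerQ (c r : ℝ) (P : ℝ[X]) (j : ℕ) :
    ∑' k, P.coeff k * meixnerQ c r k j = (meixnerDiffOp c r P).coeff j := by
  simp only [meixnerDiffOp, coeff_add, coeff_sub, coeff_C_mul, coeff_X_mul_derivative]
  cases j with
  | zero =>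
    rw [tsum_mul_meixnerQ_zero, coeff_X_mul_zero, coeff_derivative]
    push_cast
    ring
  | succ i =>
    rw [tsum_mul_meixnerQ_succ, coeff_X_mul, coeff_add, coeff_C_mul, coeff_C_mul,
      coeff_X_mul_derivative, coeff_derivative]
    push_cast
    ring

theorem binomLink_eq_coeff (r r' : ℝ) (l k : ℕ) :
    binomLink r r' l k = (bernoulliPGF (r / r') ^ l).coeff k :=
  (coeff_bernoulliPGF_pow _ l k).symm

theorem meixnerQ_commutes_with_binomLink_general (c : ℝ)
    (r r' : ℝ) (hr : 0 < r) (hrr' : r < r') (l j : ℕ) :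
    ∑' k : ℕ, meixnerQ c r' l k * binomLink r r' k j
      = ∑' k : ℕ, binomLink r r' l k * meixnerQ c r k j := by
  have hDiff := meixnerDiffOp_bernoulliPGF_pow c r' (r / r') l
  rw [mul_div_cancel₀ r (hr.trans hrr').ne'] at hDiff
  simp only [binomLink_eq_coeff]
  rw [tsum_meixnerQ_mul, tsum_coeff_mul_meixnerQ, hDiff]
  simp only [coeff_add, coeff_sub, coeff_C_mul]

/-- The Meixner `Q`-matrices commute with the binomial links:
`Q^{(c)}_{r'} Λ^{r'}_r = Λ^{r'}_r Q^{(c)}_r`. -/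
theorem meixnerQ_commutes_with_binomLink (c : ℝ) (hc : 0 < c)
    (r r' : ℝ) (hr : 0 < r) (hrr' : r < r') (l j : ℕ) :
    ∑' k : ℕ, meixnerQ c r' l k * binomLink r r' k j
      = ∑' k : ℕ, binomLink r r' l k * meixnerQ c r k j :=
  meixnerQ_commutes_with_binomLink_general c r r' hr hrr' l j
end

section
/- For any r > 0, c > 0, and n ∈ ℤ_+, the Poisson link maps the Meixner polynomial to the Laguerre polynomial: ∑_{l=0}^∞ e^{-rx}(rx)^l/l! · Meix_n(l; c, r) = r^n · Lag_n(x; c) for all x ≥ 0. -/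
/-- Pochhammer symbol `(c)_m = c(c+1)⋯(c+m-1)`. -/
noncomputable def poch (c : ℝ) (m : ℕ) : ℝ := ∏ i ∈ Finset.range m, (c + i)

/-- The monic Meixner polynomial. -/
noncomputable def Meix (c r : ℝ) (n : ℕ) (x : ℝ) : ℝ :=
  poch c n * ∑ m ∈ Finset.range (n + 1),
    (-r) ^ (n - m) * ffall n m / (poch c m * m.factorial) * ffall x m

/-- The monic Laguerre polynomial. -/
noncomputable def Lag (c : ℝ) (n : ℕ) (x : ℝ) : ℝ :=
  poch c n * ∑ m ∈ Finset.range (n + 1),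
    (-1 : ℝ) ^ (n - m) * ffall n m / (poch c m * m.factorial) * x ^ m

open Finset

lemma ffall_natCast_s11 (l m : ℕ) : ffall (l : ℝ) m = l.descFactorial m := by
  induction m with
  | zero => simp [ffall]
  | succ m ih =>
    rw [ffall, prod_range_succ, ← ffall, ih, Nat.descFactorial_succ]
    rcases le_or_gt m l with hml | hlm
    · rw [Nat.cast_mul, Nat.cast_sub hml, mul_comm]
    · simp [Nat.descFactorial_eq_zero_iff_lt.mpr hlm]

lemma ffall_natCast_eq_zero_of_lt {l m : ℕ} (h : l < m) : ffall (l : ℝ) m = 0 := by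
  rw [ffall_natCast_s11, Nat.descFactorial_eq_zero_iff_lt.mpr h, Nat.cast_zero]

lemma ffall_natCast_add_mul_factorial (k m : ℕ) :
    ffall ((k + m : ℕ) : ℝ) m * k.factorial = (k + m).factorial := by
  have h := Nat.factorial_mul_descFactorial (Nat.le_add_left m k)
  rw [Nat.add_sub_cancel] at h
  rw [ffall_natCast_s11, mul_comm]
  exact_mod_cast h

lemma hasSum_poisson_mul_ffall (t : ℝ) (m : ℕ) :
    HasSum (fun l : ℕ => Real.exp (-t) * t ^ l / l.factorial * ffall l m) (t ^ m) := by
  -- only `l ≥ m` contributes; after the shift `l = k + m` this is `e^{-t} t^m` times `exp t`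
  rw [← hasSum_nat_add_iff' m, sum_eq_zero fun l hl => by
    rw [ffall_natCast_eq_zero_of_lt (mem_range.mp hl), mul_zero], sub_zero]
  have hexp : HasSum (fun k : ℕ => t ^ k / k.factorial) (Real.exp t) := by
    simpa [Real.exp_eq_exp_ℝ] using NormedSpace.expSeries_div_hasSum_exp t
  have h := hexp.mul_left (Real.exp (-t) * t ^ m)
  rw [mul_right_comm, ← Real.exp_add, neg_add_cancel, Real.exp_zero, one_mul] at h
  refine h.congr_fun fun k => ?_
  have hk : (k.factorial : ℝ) ≠ 0 := by positivity
  have hkm : ((k + m).factorial : ℝ) ≠ 0 := by positivity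
  rw [← mul_div_cancel_right₀ (ffall _ m) hk, ffall_natCast_add_mul_factorial, pow_add]
  field_simp

lemma hasSum_poisson_mul_sum_ffall (t : ℝ) (s : Finset ℕ) (a : ℕ → ℝ) :
    HasSum (fun l : ℕ => Real.exp (-t) * t ^ l / l.factorial * ∑ m ∈ s, a m * ffall l m)
      (∑ m ∈ s, a m * t ^ m) :=
  (hasSum_sum fun m _ => (hasSum_poisson_mul_ffall t m).mul_left (a m)).congr_fun fun l => by
    rw [mul_sum]
    exact sum_congr rfl fun m _ => by ring

theorem poisson_link_meixner_to_laguerre_general (c r : ℝ)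
    (n : ℕ) (x : ℝ) :
    ∑' l : ℕ, Real.exp (-(r * x)) * (r * x) ^ l / l.factorial * Meix c r n l
      = r ^ n * Lag c n x := by
  set a : ℕ → ℝ := fun m => poch c n * ((-r) ^ (n - m) * ffall n m / (poch c m * m.factorial))
  have hMeix : ∀ y, Meix c r n y = ∑ m ∈ range (n + 1), a m * ffall y m := fun y => by
    rw [Meix, mul_sum]
    exact sum_congr rfl fun m _ => by ring
  simp only [hMeix]
  rw [(hasSum_poisson_mul_sum_ffall (r * x) _ a).tsum_eq, Lag, mul_sum, mul_sum]
  refine sum_congr rfl fun m hm => ?_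
  have hrn : r ^ (n - m) * r ^ m = r ^ n := by
    rw [← pow_add, Nat.sub_add_cancel (Nat.lt_succ_iff.mp (mem_range.mp hm))]
  simp only [a]
  rw [mul_pow, neg_pow]
  linear_combination (poch c n * (-1) ^ (n - m) * ffall n m / (poch c m * m.factorial) * x ^ m) * hrn

/-- The Poisson link maps the Meixner polynomial to the Laguerre polynomial. -/
theorem poisson_link_meixner_to_laguerre (c r : ℝ) (hc : 0 < c) (hr : 0 < r)
    (n : ℕ) (x : ℝ) (hx : 0 ≤ x) :
    ∑' l : ℕ, Real.exp (-(r * x)) * (r * x) ^ l / l.factorial * Meix c r n l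
      = r ^ n * Lag c n x :=
  poisson_link_meixner_to_laguerre_general c r n x
end

section
/- For any fixed s > 0, m ∈ ℤ_+, the binomial link converges uniformly to the Poisson link under the scaling l = rx: lim_{r→∞} sup_{l ∈ ℤ_+} | C(l,m)(s/r)^m(1-s/r)^{l-m} − e^{-s·l/r}(s·l/r)^m/m! | = 0. -/
/-!
Write `p = s / r`, `x = p l` and `l^(m)` for the falling factorial `l (l-1) ⋯ (l-m+1)`. Then
`m! (Λ^r_s - Λ^∞_s) = p^m (l^(m) - l^m) (1-p)^(l-m) + x^m ((1-p)^(l-m) - e^(-x))`.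
The bound `|a^n - b^n| ≤ n max(a, b)^(n-1) |a - b|` gives `l^m - l^(m) ≤ m (m-1) l^(m-1)` and,
with `a = e^(-p)`, `b = 1 - p`, `|(1-p)^(l-m) - e^(-x)| ≤ p (x + m) e^(p(m+1)) e^(-x)`.
Each resulting term is `p` times some `y^k e^(-y)`, and `y^k e^(-y) ≤ k!` whatever `y ≥ 0` is,
so the difference is at most `(3m+1) e^(m+1) s / r` uniformly in `l`.
-/

open Real
open scoped Nat

lemma pow_mul_exp_neg_le_factorial {x : ℝ} (hx : 0 ≤ x) (k : ℕ) :
    x ^ k * exp (-x) ≤ k ! := by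
  have h := pow_div_factorial_le_exp x hx k
  rw [div_le_iff₀ (by positivity)] at h
  rw [exp_neg, ← div_eq_mul_inv, div_le_iff₀ (exp_pos x)]
  linarith [mul_comm (exp x) (k ! : ℝ)]

lemma Nat.pow_sub_descFactorial_le (l m : ℕ) :
    l ^ m - l.descFactorial m ≤ m * (m - 1) * l ^ (m - 1) := by
  rcases m with _ | m
  · simp
  set b := l - m
  have hbl : b ≤ l := l.sub_le m
  have hpow : b ^ (m + 1) ≤ l ^ (m + 1) := Nat.pow_le_pow_left hbl _
  have hmvt : l ^ (m + 1) - b ^ (m + 1) ≤ (l - b) * (m + 1) * l ^ m := by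
    have h := abs_pow_sub_pow_le (l : ℤ) (b : ℤ) (m + 1)
    have hbl' : (b : ℤ) ≤ l := by exact_mod_cast hbl
    rw [abs_of_nonneg (sub_nonneg.mpr hbl'), abs_of_nonneg (by positivity : (0 : ℤ) ≤ l),
      abs_of_nonneg (by positivity : (0 : ℤ) ≤ b), max_eq_left hbl',
      abs_of_nonneg (sub_nonneg.mpr (pow_le_pow_left₀ (by positivity) hbl' _))] at h
    zify [hbl, hpow]
    simpa using h
  have hlow : b ^ (m + 1) ≤ l.descFactorial (m + 1) := by
    simpa using l.pow_sub_le_descFactorial (m + 1)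
  calc l ^ (m + 1) - l.descFactorial (m + 1)
      ≤ l ^ (m + 1) - b ^ (m + 1) := Nat.sub_le_sub_left hlow _
    _ ≤ (l - b) * (m + 1) * l ^ m := hmvt
    _ ≤ m * (m + 1) * l ^ m := by gcongr; omega
    _ = (m + 1) * (m + 1 - 1) * l ^ (m + 1 - 1) := by rw [Nat.add_sub_cancel]; ring

/-- `Λ^r_s(l, m) = binomialLink (s / r) l m` and `Λ^∞_s(x, m) = poissonLink (s * x) m`. -/
noncomputable def binomialLink (p : ℝ) (l m : ℕ) : ℝ := l.choose m * p ^ m * (1 - p) ^ (l - m)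

noncomputable def poissonLink (x : ℝ) (m : ℕ) : ℝ := exp (-x) * x ^ m / m !

section

variable {p : ℝ}

lemma one_sub_pow_le_exp_neg_mul (hp : p ≤ 1) (n : ℕ) : (1 - p) ^ n ≤ exp (-(p * n)) := by
  calc (1 - p) ^ n ≤ exp (-p) ^ n := pow_le_pow_left₀ (by linarith) (one_sub_le_exp_neg p) n
    _ = exp (-(p * n)) := by rw [← exp_nat_mul]; ring_nf

lemma exp_neg_mul_sub_one_sub_pow_le (hp0 : 0 ≤ p) (hp1 : p ≤ 1) (n : ℕ) :
    exp (-(p * n)) - (1 - p) ^ n ≤ n * p ^ 2 * exp (p - p * n) := by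
  have hq : 0 ≤ 1 - p := by linarith
  have hqe : 1 - p ≤ exp (-p) := one_sub_le_exp_neg p
  have hgap : |exp (-p) - (1 - p)| ≤ p ^ 2 := by
    have h := abs_exp_sub_one_sub_id_le (x := -p) (by rwa [abs_neg, abs_of_nonneg hp0])
    rwa [show exp (-p) - 1 - -p = exp (-p) - (1 - p) by ring, neg_sq] at h
  have hmvt := abs_pow_sub_pow_le (exp (-p)) (1 - p) n
  rw [abs_of_pos (exp_pos _), abs_of_nonneg hq, max_eq_left hqe, ← exp_nat_mul,
    ← exp_nat_mul] at hmvt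
  have hexp : exp ((n - 1 : ℕ) * -p) ≤ exp (p - p * n) := by
    apply exp_le_exp.mpr
    have : (n : ℝ) - 1 ≤ (n - 1 : ℕ) := by rcases n with _ | n <;> simp
    nlinarith
  calc exp (-(p * n)) - (1 - p) ^ n ≤ |exp (n * -p) - (1 - p) ^ n| := by
        rw [mul_neg, mul_comm]; exact le_abs_self _
    _ ≤ |exp (-p) - (1 - p)| * n * exp ((n - 1 : ℕ) * -p) := hmvt
    _ ≤ p ^ 2 * n * exp (p - p * n) := by gcongr
    _ = n * p ^ 2 * exp (p - p * n) := by ring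

lemma abs_one_sub_pow_sub_exp_neg_mul_le (hp0 : 0 ≤ p) (hp1 : p ≤ 1) {n l m : ℕ}
    (hnl : n ≤ l) (hln : l ≤ n + m) :
    |(1 - p) ^ n - exp (-(p * l))| ≤ p * (p * l + m) * (exp (p * (m + 1)) * exp (-(p * l))) := by
  have hnl' : (n : ℝ) ≤ l := by exact_mod_cast hnl
  have hln' : (l : ℝ) ≤ n + m := by exact_mod_cast hln
  set F := exp (p * (m + 1)) * exp (-(p * l))
  have hF : F = exp (p * (m + 1) - p * l) := by rw [sub_eq_add_neg, exp_add]
  have hnF : exp (-(p * n)) ≤ F := hF ▸ exp_le_exp.mpr (by nlinarith)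
  have hnF' : exp (p - p * n) ≤ F := hF ▸ exp_le_exp.mpr (by nlinarith)
  have hq := one_sub_pow_le_exp_neg_mul hp1 n
  have hE : exp (-(p * l)) ≤ exp (-(p * n)) := exp_le_exp.mpr (by nlinarith)
  have hshift : exp (-(p * n)) - exp (-(p * l)) ≤ p * m * exp (-(p * n)) := by
    have h := mul_le_mul_of_nonneg_left (one_sub_le_exp_neg (p * (l - n))) (exp_pos (-(p * n))).le
    rw [← exp_add, show -(p * n) + -(p * (l - n)) = -(p * l) by ring] at h
    have hgap : p * (l - n) * exp (-(p * n)) ≤ p * m * exp (-(p * n)) := by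
      gcongr; linarith
    linarith
  calc |(1 - p) ^ n - exp (-(p * l))|
      ≤ (exp (-(p * n)) - (1 - p) ^ n) + (exp (-(p * n)) - exp (-(p * l))) := by
        rw [abs_sub_le_iff]; constructor <;> linarith
    _ ≤ n * p ^ 2 * exp (p - p * n) + p * m * exp (-(p * n)) :=
        add_le_add (exp_neg_mul_sub_one_sub_pow_le hp0 hp1 n) hshift
    _ ≤ l * p ^ 2 * F + p * m * F := by gcongr
    _ = p * (p * l + m) * F := by ring

lemma pow_mul_abs_descFactorial_sub_pow_mul_exp_neg_le (hp0 : 0 ≤ p) (l m : ℕ) :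
    p ^ m * |(l.descFactorial m : ℝ) - l ^ m| * exp (-(p * l)) ≤ m * m ! * p := by
  rcases m with _ | k
  · simp
  have hd : |(l.descFactorial (k + 1) : ℝ) - l ^ (k + 1)| ≤ (k + 1) * k * l ^ k := by
    have h := Nat.pow_sub_descFactorial_le l (k + 1)
    rw [Nat.add_sub_cancel] at h
    have hle : (l.descFactorial (k + 1) : ℝ) ≤ l ^ (k + 1) := by
      exact_mod_cast l.descFactorial_le_pow (k + 1)
    rw [abs_of_nonpos (sub_nonpos.mpr hle), neg_sub]
    rw [← Nat.cast_le (α := ℝ), Nat.cast_sub (l.descFactorial_le_pow (k + 1))] at h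
    exact_mod_cast h
  calc p ^ (k + 1) * |(l.descFactorial (k + 1) : ℝ) - l ^ (k + 1)| * exp (-(p * l))
      ≤ p ^ (k + 1) * ((k + 1) * k * l ^ k) * exp (-(p * l)) := by gcongr
    _ = (k + 1) * k * p * ((p * l) ^ k * exp (-(p * l))) := by ring
    _ ≤ (k + 1) * k * p * k ! := by gcongr; exact pow_mul_exp_neg_le_factorial (by positivity) k
    _ ≤ ((k + 1 : ℕ) : ℝ) * (k + 1) ! * p := by
        push_cast [Nat.factorial_succ]
        have : (0 : ℝ) ≤ (k + 1) * p * k ! := by positivity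
        nlinarith

lemma pow_mul_abs_one_sub_pow_sub_exp_neg_le (hp0 : 0 ≤ p) (hp1 : p ≤ 1) {n l m : ℕ}
    (hnl : n ≤ l) (hln : l ≤ n + m) :
    (p * l) ^ m * |(1 - p) ^ n - exp (-(p * l))| ≤ (2 * m + 1) * m ! * exp (p * (m + 1)) * p := by
  have hx : 0 ≤ p * l := by positivity
  calc (p * l) ^ m * |(1 - p) ^ n - exp (-(p * l))|
      ≤ (p * l) ^ m * (p * (p * l + m) * (exp (p * (m + 1)) * exp (-(p * l)))) := by
        gcongr; exact abs_one_sub_pow_sub_exp_neg_mul_le hp0 hp1 hnl hln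
    _ = p * exp (p * (m + 1)) *
          ((p * l) ^ (m + 1) * exp (-(p * l)) + m * ((p * l) ^ m * exp (-(p * l)))) := by ring
    _ ≤ p * exp (p * (m + 1)) * ((m + 1) ! + m * m !) := by
        gcongr
        · exact pow_mul_exp_neg_le_factorial hx (m + 1)
        · exact pow_mul_exp_neg_le_factorial hx m
    _ = (2 * m + 1) * m ! * exp (p * (m + 1)) * p := by push_cast [Nat.factorial_succ]; ring

lemma abs_binomialLink_sub_poissonLink_le (hp0 : 0 ≤ p) (hp1 : p ≤ 1) (l m : ℕ) :
    |binomialLink p l m - poissonLink (p * l) m| ≤ (3 * m + 1) * exp (m + 1) * p := by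
  set E := exp (-(p * l))
  set G := exp (p * (m + 1))
  have hdecomp : binomialLink p l m - poissonLink (p * l) m =
      (p ^ m * ((l.descFactorial m : ℝ) - l ^ m) * (1 - p) ^ (l - m)
        + (p * l) ^ m * ((1 - p) ^ (l - m) - E)) / m ! := by
    rw [binomialLink, poissonLink, Nat.descFactorial_eq_factorial_mul_choose]
    push_cast
    field_simp
    ring
  have hq : (1 - p) ^ (l - m) ≤ G * E := by
    refine (one_sub_pow_le_exp_neg_mul hp1 _).trans ?_
    rw [← exp_add]
    apply exp_le_exp.mpr
    have : (l : ℝ) - m ≤ (l - m : ℕ) := by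
      rw [sub_le_iff_le_add]; exact_mod_cast (by omega : l ≤ l - m + m)
    nlinarith
  have hG : G ≤ exp (m + 1) := exp_le_exp.mpr (mul_le_of_le_one_left (by positivity) hp1)
  rw [hdecomp, abs_div, abs_of_pos (by positivity : (0 : ℝ) < m !), div_le_iff₀ (by positivity)]
  calc |p ^ m * ((l.descFactorial m : ℝ) - l ^ m) * (1 - p) ^ (l - m)
        + (p * l) ^ m * ((1 - p) ^ (l - m) - E)|
      ≤ p ^ m * |(l.descFactorial m : ℝ) - l ^ m| * (1 - p) ^ (l - m)
        + (p * l) ^ m * |(1 - p) ^ (l - m) - E| := by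
        refine (abs_add_le _ _).trans_eq ?_
        rw [abs_mul, abs_mul, abs_mul, abs_of_nonneg (by positivity : 0 ≤ p ^ m),
          abs_of_nonneg (pow_nonneg (sub_nonneg.mpr hp1) (l - m)),
          abs_of_nonneg (by positivity : 0 ≤ (p * l) ^ m)]
    _ ≤ p ^ m * |(l.descFactorial m : ℝ) - l ^ m| * (G * E)
        + (p * l) ^ m * |(1 - p) ^ (l - m) - E| := by gcongr
    _ = G * (p ^ m * |(l.descFactorial m : ℝ) - l ^ m| * E)
        + (p * l) ^ m * |(1 - p) ^ (l - m) - E| := by ring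
    _ ≤ G * (m * m ! * p) + (2 * m + 1) * m ! * G * p :=
        add_le_add (mul_le_mul_of_nonneg_left
            (pow_mul_abs_descFactorial_sub_pow_mul_exp_neg_le hp0 l m) (exp_pos _).le)
          (pow_mul_abs_one_sub_pow_sub_exp_neg_le hp0 hp1 (Nat.sub_le l m) (by omega))
    _ = (3 * m + 1) * G * p * m ! := by ring
    _ ≤ (3 * m + 1) * exp (m + 1) * p * m ! := by gcongr

end

/-- For fixed `s > 0` and `m`, the binomial link converges to the Poisson link
uniformly in `l` under the scaling `x = l/r`. -/
theorem binomial_link_tendsto_poisson_link (s : ℝ) (hs : 0 < s) (m : ℕ) :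
    ∀ ε > 0, ∃ R : ℝ, ∀ r : ℝ, R ≤ r → ∀ l : ℕ,
      |(l.choose m : ℝ) * (s / r) ^ m * (1 - s / r) ^ (l - m)
          - Real.exp (-(s * l / r)) * (s * l / r) ^ m / m.factorial| < ε := by
  intro ε hε
  set K := (3 * m + 1) * exp (m + 1)
  refine ⟨max s (K * s / ε + 1), fun r hr l => ?_⟩
  have hsr : s ≤ r := le_of_max_le_left hr
  have hKr : K * s / ε < r := (lt_add_one _).trans_le (le_of_max_le_right hr)
  have hr0 : 0 < r := hs.trans_le hsr
  have h := abs_binomialLink_sub_poissonLink_le (div_nonneg hs.le hr0.le)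
    ((div_le_one hr0).mpr hsr) l m
  rw [binomialLink, poissonLink, div_mul_eq_mul_div] at h
  refine h.trans_lt ?_
  rw [div_lt_iff₀ hε] at hKr
  rw [← mul_div_assoc, div_lt_iff₀ hr0]
  linarith
end

section
/- For every m ∈ ℤ_+ and s > 0, (1 - s/r)^{rx} · x^m converges to e^{-sx} · x^m uniformly in x ∈ ℝ_+ as r → +∞. -/
/-!
Writing `(1 - s/r)^{rx} = e^{-a_r x}` with `a_r = -r log (1 - s/r)`, we have `a_r ≥ s` (from
`log (1 - t) ≤ -t`) and `a_r → s`. For `a ≥ s`, convexity of `exp` gives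
`0 ≤ e^{-sx} - e^{-ax} ≤ (a - s) x e^{-sx}`, and `x^{m+1} e^{-sx} ≤ (m+1)!/s^{m+1}` on `ℝ₊`,
so the difference is at most `(a_r - s) (m+1)!/s^{m+1}` uniformly in `x ≥ 0`.
-/

open Real Filter Topology
open scoped Nat

lemma exp_neg_mul_mul_pow_le {s x : ℝ} (hs : 0 < s) (hx : 0 ≤ x) (n : ℕ) :
    exp (-(s * x)) * x ^ n ≤ n ! / s ^ n := by
  have h := pow_div_factorial_le_exp (s * x) (mul_nonneg hs.le hx) n
  rw [div_le_iff₀ (by positivity), mul_pow] at h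
  rw [le_div_iff₀ (by positivity), exp_neg, ← div_eq_inv_mul, div_mul_eq_mul_div,
    div_le_iff₀ (exp_pos _)]
  linarith

lemma exp_neg_mul_sub_exp_neg_mul_le (s a x : ℝ) :
    exp (-(s * x)) - exp (-(a * x)) ≤ (a - s) * x * exp (-(s * x)) := by
  have hsplit : exp (-(a * x)) = exp (-(s * x)) * exp (-((a - s) * x)) := by
    rw [← exp_add]; ring_nf
  have h := mul_le_mul_of_nonneg_left (add_one_le_exp (-((a - s) * x))) (exp_nonneg (-(s * x)))
  rw [hsplit]
  linarith

lemma abs_exp_neg_mul_mul_pow_sub_le {s a x : ℝ} (hs : 0 < s) (hsa : s ≤ a) (hx : 0 ≤ x)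
    (m : ℕ) :
    |exp (-(a * x)) * x ^ m - exp (-(s * x)) * x ^ m| ≤ (a - s) * ((m + 1)! / s ^ (m + 1)) := by
  have hxm : 0 ≤ x ^ m := pow_nonneg hx m
  have hexp : exp (-(a * x)) ≤ exp (-(s * x)) :=
    exp_le_exp.2 (neg_le_neg (mul_le_mul_of_nonneg_right hsa hx))
  rw [abs_sub_comm, abs_of_nonneg (sub_nonneg.2 (mul_le_mul_of_nonneg_right hexp hxm))]
  calc exp (-(s * x)) * x ^ m - exp (-(a * x)) * x ^ m
      = (exp (-(s * x)) - exp (-(a * x))) * x ^ m := by ring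
    _ ≤ (a - s) * x * exp (-(s * x)) * x ^ m :=
        mul_le_mul_of_nonneg_right (exp_neg_mul_sub_exp_neg_mul_le s a x) hxm
    _ = (a - s) * (exp (-(s * x)) * x ^ (m + 1)) := by ring
    _ ≤ (a - s) * ((m + 1)! / s ^ (m + 1)) :=
        mul_le_mul_of_nonneg_left (exp_neg_mul_mul_pow_le hs hx (m + 1)) (sub_nonneg.2 hsa)

lemma le_neg_mul_log_one_sub_div {s r : ℝ} (hr : 0 < r) (hsr : s < r) :
    s ≤ -(r * log (1 - s / r)) := by
  have hlog : log (1 - s / r) ≤ -(s / r) := by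
    linarith [log_le_sub_one_of_pos (sub_pos.2 ((div_lt_one hr).2 hsr))]
  have h := mul_le_mul_of_nonneg_left hlog hr.le
  rw [mul_neg, mul_div_cancel₀ s hr.ne'] at h
  linarith

lemma tendsto_neg_mul_log_one_sub_div (s : ℝ) :
    Tendsto (fun r ↦ -(r * log (1 - s / r))) atTop (𝓝 s) := by
  simpa only [neg_div, ← sub_eq_add_neg, neg_neg] using
    (tendsto_mul_log_one_add_div_atTop (-s)).neg

/-- `(1 - s/r)^{rx} x^m → e^{-sx} x^m` uniformly on `ℝ₊` as `r → +∞`. -/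
theorem rpow_tendsto_exp_uniformly (m : ℕ) (s : ℝ) (hs : 0 < s) :
    ∀ ε > 0, ∃ R : ℝ, ∀ r : ℝ, R ≤ r → ∀ x : ℝ, 0 ≤ x →
      |(1 - s / r) ^ (r * x) * x ^ m - Real.exp (-(s * x)) * x ^ m| < ε := by
  intro ε hε
  set C : ℝ := (m + 1)! / s ^ (m + 1)
  have hC : 0 < C := by positivity
  obtain ⟨R, hR⟩ := eventually_atTop.1 <|
    ((tendsto_neg_mul_log_one_sub_div s).eventually (gt_mem_nhds (lt_add_of_pos_right s
      (div_pos hε hC)))).and (eventually_gt_atTop s)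
  refine ⟨R, fun r hr x hx ↦ ?_⟩
  obtain ⟨hclose, hsr⟩ := hR r hr
  have hr0 : 0 < r := hs.trans hsr
  set a := -(r * log (1 - s / r)) with ha
  have hpow : (1 - s / r) ^ (r * x) = exp (-(a * x)) := by
    rw [rpow_def_of_pos (sub_pos.2 ((div_lt_one hr0).2 hsr)), ha]; ring_nf
  calc |(1 - s / r) ^ (r * x) * x ^ m - exp (-(s * x)) * x ^ m| ≤ (a - s) * C := by
        rw [hpow]; exact abs_exp_neg_mul_mul_pow_sub_le hs (le_neg_mul_log_one_sub_div hr0 hsr) hx m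
    _ < ε := (lt_div_iff₀ hC).1 (by linarith)
end

section
/- For any fixed 0 < q < 1, the linear span of the functions x ↦ q^x · x^m, m = 0, 1, 2, …, is dense in the Banach space C_0(ℝ_+) of continuous real functions on [0,∞) vanishing at infinity, equipped with the supremum norm. -/
/-!
Put `a = -log q > 0`, so that `q^x x^m = e^{-a x} x^m`, and let `V` be the closure of the span.
If `V` contains every `e^{-c x} x^m` and `2|b| < c`, it contains every `e^{-(c+b) x} x^m`:
expanding `e^{-b x}` in its Taylor series gives `∑ⱼ (-b)^j / j! · e^{-c x} x^{m+j}`, whose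
`j`-th term has norm at most `2^{-j} · sup_x e^{-(c-2|b|) x} x^m`. Steps of length `a / 3` thus
put every `e^{-n a x} = (q^x)^n`, `n ≥ 1`, into `V`. Finally, for `f ∈ C₀` the function
`g(t) = f(-log t / a)` extends continuously to `[0, 1]` by `g(0) = 0`; if a polynomial `p` is
uniformly close to `g` (Weierstrass), then `p(q^x) - p(0) ∈ V` is uniformly close to `f`.
-/

open Filter Topology Real Set Polynomial ZeroAtInfty
open scoped Nat

instance {α : Type*} [Preorder α] [TopologicalSpace α] [CompactIccSpace α]
    [ClosedIciTopology α] (a : α) : CompactIccSpace (Ici a) where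
  isCompact_Icc {_ _} := by
    exact isClosed_Ici.isClosedEmbedding_subtypeVal.isCompact_preimage isCompact_Icc

namespace ZeroAtInftyContinuousMap

variable {α β : Type*} [TopologicalSpace α] [NormedAddCommGroup β]

lemma norm_apply_le (f : C₀(α, β)) (x : α) : ‖f x‖ ≤ ‖f‖ :=
  norm_toBCF_eq_norm (f := f) ▸ f.toBCF.norm_coe_le_norm x

lemma norm_le_of_forall {f : C₀(α, β)} {C : ℝ} (hC : 0 ≤ C) (h : ∀ x, ‖f x‖ ≤ C) : ‖f‖ ≤ C :=
  norm_toBCF_eq_norm (f := f) ▸ (BoundedContinuousFunction.norm_le hC).2 h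

lemma hasSum_apply {ι : Type*} {f : ι → C₀(α, β)} {s : C₀(α, β)} (h : HasSum f s) (x : α) :
    HasSum (fun i => f i x) (s x) :=
  h.map (⟨⟨fun g => g x, rfl⟩, fun _ _ => rfl⟩ : C₀(α, β) →+ β)
    ((continuous_eval_const x).comp isometry_toBCF.continuous)

end ZeroAtInftyContinuousMap

noncomputable def expMonomial (c : ℝ) (hc : 0 < c) (m : ℕ) : C₀(Ici (0 : ℝ), ℝ) where
  toFun x := exp (-c * x) * (x : ℝ) ^ m
  continuous_toFun := by fun_prop
  zero_at_infty' := by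
    rw [cocompact_eq_atTop, tendsto_comp_val_Ici_atTop (f := fun x : ℝ => exp (-c * x) * x ^ m)]
    simpa [mul_comm, rpow_natCast] using tendsto_rpow_mul_exp_neg_mul_atTop_nhds_zero m c hc

@[simp] lemma expMonomial_apply (c : ℝ) (hc : 0 < c) (m : ℕ) (x : Ici (0 : ℝ)) :
    expMonomial c hc m x = exp (-c * x) * (x : ℝ) ^ m := rfl

lemma norm_smul_expMonomial_le {b c : ℝ} (hc : 0 < c) (hbc : 2 * |b| < c) (m j : ℕ) :
    ‖((-b) ^ j / j !) • expMonomial c hc (m + j)‖ ≤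
      (1 / 2) ^ j * ‖expMonomial (c - 2 * |b|) (by linarith) m‖ := by
  refine ZeroAtInftyContinuousMap.norm_le_of_forall (by positivity) fun x => ?_
  have hx : 0 ≤ (x : ℝ) := x.2
  have hexp : (|b| * x) ^ j / j ! ≤ (1 / 2) ^ j * exp (2 * |b| * x) :=
    calc (|b| * x) ^ j / j ! = (1 / 2) ^ j * ((2 * |b| * x) ^ j / j !) := by
          rw [mul_div_assoc', ← mul_pow]; ring_nf
      _ ≤ _ := by gcongr; exact pow_div_factorial_le_exp _ (by positivity) j
  calc ‖(((-b) ^ j / j !) • expMonomial c hc (m + j)) x‖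
      = exp (-c * x) * (x : ℝ) ^ m * ((|b| * x) ^ j / j !) := by
        simp only [ZeroAtInftyContinuousMap.smul_apply, expMonomial_apply, smul_eq_mul, norm_mul,
          norm_div, norm_pow, norm_neg, Real.norm_eq_abs, abs_of_nonneg hx, abs_exp, Nat.abs_cast]
        ring
    _ ≤ exp (-c * x) * (x : ℝ) ^ m * ((1 / 2) ^ j * exp (2 * |b| * x)) := by gcongr
    _ = (1 / 2) ^ j * expMonomial (c - 2 * |b|) (by linarith) m x := by
        rw [expMonomial_apply, mul_left_comm, mul_right_comm _ _ (exp _), ← exp_add]; ring_nf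
    _ ≤ (1 / 2) ^ j * ‖expMonomial (c - 2 * |b|) (by linarith) m‖ := by
        gcongr; exact (le_norm_self _).trans (ZeroAtInftyContinuousMap.norm_apply_le _ x)

lemma hasSum_smul_expMonomial {b c : ℝ} (hc : 0 < c) (hbc : 2 * |b| < c) (m : ℕ) :
    HasSum (fun j : ℕ => ((-b) ^ j / j !) • expMonomial c hc (m + j))
      (expMonomial (c + b) (by linarith [neg_abs_le b]) m) := by
  obtain ⟨s, hs⟩ : Summable fun j : ℕ => ((-b) ^ j / j !) • expMonomial c hc (m + j) :=
    .of_norm_bounded (summable_geometric_two.mul_right _) (norm_smul_expMonomial_le hc hbc m)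
  convert hs
  ext x
  refine HasSum.unique ?_ (ZeroAtInftyContinuousMap.hasSum_apply hs x)
  have hterm (j : ℕ) : (((-b) ^ j / j !) • expMonomial c hc (m + j)) x =
      exp (-c * x) * (x : ℝ) ^ m * ((-b * x) ^ j / j !) := by
    simp only [ZeroAtInftyContinuousMap.smul_apply, expMonomial_apply, smul_eq_mul]
    ring
  have hsum : expMonomial (c + b) (by linarith [neg_abs_le b]) m x =
      exp (-c * x) * (x : ℝ) ^ m * exp (-b * x) := by
    rw [expMonomial_apply, mul_right_comm, ← exp_add]
    ring_nf
  simp only [hterm, hsum, exp_eq_exp_ℝ]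
  exact (NormedSpace.expSeries_div_hasSum_exp (-b * x)).mul_left _

noncomputable def compNegLogDiv (a : ℝ) (f : C₀(Ici (0 : ℝ), ℝ)) (t : ℝ) : ℝ :=
  if 0 < t then f (projIci 0 (-log t / a)) else 0

@[simp] lemma compNegLogDiv_zero (a : ℝ) (f : C₀(Ici (0 : ℝ), ℝ)) : compNegLogDiv a f 0 = 0 :=
  if_neg (lt_irrefl 0)

lemma compNegLogDiv_exp_neg_mul {a : ℝ} (ha : a ≠ 0) (f : C₀(Ici (0 : ℝ), ℝ)) (x : Ici (0 : ℝ)) :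
    compNegLogDiv a f (exp (-a * x)) = f x := by
  rw [compNegLogDiv, if_pos (exp_pos _), log_exp, neg_mul, neg_neg, mul_div_cancel_left₀ _ ha,
    projIci_of_mem x.2]

lemma continuous_compNegLogDiv {a : ℝ} (ha : 0 < a) (f : C₀(Ici (0 : ℝ), ℝ)) :
    Continuous (compNegLogDiv a f) := by
  rw [continuous_iff_continuousAt]
  intro t
  rcases lt_trichotomy t 0 with ht | rfl | ht
  · exact continuousAt_const.congr <| (eventually_lt_nhds ht).mono fun s hs =>
      (if_neg hs.not_gt).symm
  · suffices Tendsto (compNegLogDiv a f) (𝓝[≤] 0 ⊔ 𝓝[>] 0) (𝓝 0) by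
      rw [nhdsLE_sup_nhdsGT] at this
      rwa [ContinuousAt, compNegLogDiv_zero]
    refine tendsto_sup.2 ⟨?_, ?_⟩
    · exact tendsto_const_nhds.congr' <| eventually_nhdsWithin_of_forall fun s hs =>
        (if_neg (not_lt.2 hs)).symm
    · have hlog : Tendsto (fun t => projIci (0 : ℝ) (-log t / a)) (𝓝[>] 0) atTop :=
        tendsto_Ici_atTop.2 <| tendsto_atTop_mono (fun _ => le_max_right _ _)
          ((tendsto_neg_atBot_atTop.comp tendsto_log_nhdsGT_zero).atTop_div_const ha)
      have hf := f.zero_at_infty'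
      rw [cocompact_eq_atTop] at hf
      exact (hf.comp hlog).congr' <| eventually_nhdsWithin_of_forall fun s hs =>
        (if_pos hs).symm
  · have hcont : ContinuousAt (fun s => f (projIci 0 (-log s / a))) t :=
      (f.continuous.comp ((continuous_const.max continuous_id).subtype_mk _)).continuousAt.comp
        ((continuousAt_log ht.ne').neg.div_const a)
    exact hcont.congr <| (eventually_gt_nhds ht).mono fun s hs => (if_pos hs).symm

section ClosedSubmodule

variable {V : Submodule ℝ C₀(Ici (0 : ℝ), ℝ)} (hV : IsClosed (V : Set C₀(Ici (0 : ℝ), ℝ)))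
include hV

lemma expMonomial_add_mem {b c : ℝ} (hc : 0 < c) (hbc : 2 * |b| < c)
    (h : ∀ m, expMonomial c hc m ∈ V) (m : ℕ) (hcb : 0 < c + b) : expMonomial (c + b) hcb m ∈ V :=
  hV.mem_of_tendsto (hasSum_smul_expMonomial hc hbc m) <|
    .of_forall fun _ => V.sum_mem fun j _ => V.smul_mem _ (h (m + j))

lemma expMonomial_mem_of_le {a c : ℝ} (ha : 0 < a) (h : ∀ m, expMonomial a ha m ∈ V)
    (hac : a ≤ c) (m : ℕ) : expMonomial c (ha.trans_le hac) m ∈ V := by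
  -- steps of length `a / 3` satisfy `2 |b| < c` for every `c ≥ a`
  suffices H : ∀ n : ℕ, ∀ c, a ≤ c → c ≤ a + n * (a / 3) →
      ∀ (hc : 0 < c) m, expMonomial c hc m ∈ V by
    obtain ⟨n, hn⟩ := exists_nat_ge ((c - a) / (a / 3))
    exact H n c hac (by rw [div_le_iff₀ (by positivity)] at hn; linarith) _ m
  intro n
  induction n with
  | zero =>
    intro c hac hca _
    obtain rfl : c = a := by simp only [CharP.cast_eq_zero, zero_mul, add_zero] at hca; linarith
    exact h
  | succ n ih =>
    intro c hac hca hc m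
    set c' := a + n * (a / 3) with hc'
    have hac' : a ≤ c' := le_add_of_nonneg_right (by positivity)
    rcases le_or_gt c c' with hle | hlt
    · exact ih c hac hle hc m
    · have hb : 2 * |c - c'| < c' := by
        rw [abs_of_pos (sub_pos.2 hlt)]; push_cast at hca; linarith
      simpa using expMonomial_add_mem hV (by positivity) hb
        (ih c' hac' le_rfl _) m (by simpa using hc)

lemma exists_mem_eq_eval_exp_neg_sub {a : ℝ} (ha : 0 < a) (h : ∀ m, expMonomial a ha m ∈ V)
    (p : ℝ[X]) : ∃ F ∈ V, ∀ x : Ici (0 : ℝ), F x = p.eval (exp (-a * x)) - p.eval 0 := by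
  induction p using Polynomial.induction_on' with
  | add p q hp hq =>
    obtain ⟨F, hFV, hF⟩ := hp
    obtain ⟨G, hGV, hG⟩ := hq
    refine ⟨F + G, V.add_mem hFV hGV, fun x => ?_⟩
    simp only [ZeroAtInftyContinuousMap.add_apply, hF, hG, eval_add]
    ring
  | monomial n r =>
    cases n with
    | zero => exact ⟨0, V.zero_mem, by simp⟩
    | succ n =>
      have hn : a ≤ (n + 1) * a :=
        le_mul_of_one_le_left ha.le (by linarith [n.cast_nonneg (α := ℝ)])
      refine ⟨r • expMonomial ((n + 1) * a) (by positivity) 0,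
        V.smul_mem r (expMonomial_mem_of_le hV ha h hn 0), fun x => ?_⟩
      simp only [ZeroAtInftyContinuousMap.smul_apply, expMonomial_apply, smul_eq_mul,
        eval_monomial, ← exp_nat_mul]
      push_cast
      ring_nf

lemma eq_top_of_forall_expMonomial_mem {a : ℝ} (ha : 0 < a) (h : ∀ m, expMonomial a ha m ∈ V) :
    V = ⊤ := by
  refine V.eq_top_iff'.2 fun f => ?_
  rw [← SetLike.mem_coe, ← hV.closure_eq, Metric.mem_closure_iff]
  intro ε hε
  obtain ⟨p, hp⟩ := exists_polynomial_near_of_continuousOn 0 1 (compNegLogDiv a f)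
    (continuous_compNegLogDiv ha f).continuousOn (ε / 4) (by positivity)
  obtain ⟨F, hFV, hF⟩ := exists_mem_eq_eval_exp_neg_sub hV ha h p
  refine ⟨F, hFV, ?_⟩
  rw [dist_eq_norm]
  refine (ZeroAtInftyContinuousMap.norm_le_of_forall (by positivity) fun x => ?_).trans_lt
    (by linarith : ε / 2 < ε)
  have h0 := hp 0 ⟨le_rfl, zero_le_one⟩
  have hx := hp (exp (-a * x))
    ⟨(exp_pos _).le, exp_le_one_iff.2 (mul_nonpos_of_nonpos_of_nonneg (by linarith) x.2)⟩
  rw [compNegLogDiv_zero] at h0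
  rw [compNegLogDiv_exp_neg_mul ha.ne'] at hx
  rw [ZeroAtInftyContinuousMap.sub_apply, hF, Real.norm_eq_abs, abs_le]
  constructor <;> linarith [abs_lt.1 h0, abs_lt.1 hx]

end ClosedSubmodule

/-- For fixed `0 < q < 1`, the span of the functions `x ↦ q^x x^m`, `m ∈ ℤ₊`,
is dense in `C₀([0,∞))`. -/
theorem span_qpow_monomials_dense (q : ℝ) (hq0 : 0 < q) (hq1 : q < 1) :
    Dense (↑(Submodule.span ℝ
      {f : C₀(Set.Ici (0 : ℝ), ℝ) | ∃ m : ℕ, ∀ x : Set.Ici (0 : ℝ),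
        f x = q ^ (x : ℝ) * (x : ℝ) ^ m}) : Set (C₀(Set.Ici (0 : ℝ), ℝ))) := by
  rw [Submodule.dense_iff_topologicalClosure_eq_top]
  refine eq_top_of_forall_expMonomial_mem (Submodule.isClosed_topologicalClosure _)
    (neg_pos.2 (log_neg hq0 hq1)) fun m => Submodule.le_topologicalClosure _ ?_
  exact Submodule.subset_span ⟨m, fun x => by simp [rpow_def_of_pos hq0, mul_comm]⟩
end
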